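/- Under the hypotheses of the previous setup (signature (1,n) form, K² > 0, c₂ = F·(K−F) > 0, (K−F)² = 0, a = K·F/K², R = aK − F ≠ 0), if additionally F lies in the open cone {D : D² > 0, D·K > 0} (F is big, modeling the ample cone condition on the plane spanned by K and R), then a > 1/2, and hence c₂ = (1−a)K² < K²/2, i.e., K² > 2c₂ (positive topological index). -/
import Mathlib


/-- In the setup of Statement 7 (symmetric bilinear form of signature
`(1,n)`, `K² > 0`, `c₂ = F·(K−F) > 0`, `(K−F)² = 0`, `a = K·F/K²`, `R = aK − F ≠ 0`),
if moreover `F` lies in the positive cone `{D : D² > 0, D·K > 0}` (modeling `KF` big),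
then `a > 1/2`, hence `c₂ = (1−a)K² < K²/2`, i.e. `K² > 2c₂` (positive topological
index). -/
theorem stmt8 {V : Type*} [AddCommGroup V] [Module ℝ V]
    (n : ℕ) (hn : 1 ≤ n) (hdim : Module.finrank ℝ V = 1 + n)
    (B : V →ₗ[ℝ] V →ₗ[ℝ] ℝ) (hsymm : ∀ x y : V, B x y = B y x)
    (K : V) (hK : 0 < B K K)
    -- signature (1, n): negative definite on the orthogonal complement of K
    (hsig : ∀ v : V, B v K = 0 → v ≠ 0 → B v v < 0)
    (F : V) (h₀ : B (K - F) (K - F) = 0)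
    (c₂ : ℝ) (hc₂ : c₂ = B F (K - F)) (hc₂pos : 0 < c₂)
    (a : ℝ) (ha : a = B K F / B K K)
    (R : V) (hR : R = a • K - F) (hRne : R ≠ 0)
    (hFpos : 0 < B F F ∧ 0 < B F K) :
    1 / 2 < a ∧ c₂ = (1 - a) * B K K ∧ c₂ < B K K / 2 ∧ 2 * c₂ < B K K := by
  obtain ⟨hFF, hFK⟩ := hFpos
  have hKF : B K F = a * B K K := by
    rw [ha]; field_simp
  have hsw : B F K = B K F := hsymm F K
  have hexp : B K K - B K F - B F K + B F F = 0 := by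
    have := h₀; simp [map_sub] at this; linarith
  have hc : c₂ = B F K - B F F := by
    simpa [map_sub] using hc₂
  have ha2 : 1 / 2 < a := by nlinarith
  refine ⟨ha2, by nlinarith, by nlinarith, by nlinarith⟩
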